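/- Let i, j ∈ ZMod d × ZMod d with i ≠ j, and suppose the two coherent states D(i)s and D(j)s are linearly independent. Then the non-additivity operators summed over the equivalence class vanish: the sum over all k ∈ ZMod d × ZMod d of [Π({i, j} + k) − Π({i + k}) − Π({j + k})] equals the zero operator on ℂ^d. -/

import Mathlib

open scoped Matrix ComplexOrder

noncomputable section

/-- `ω(r) = exp(2πi r / d)` for `r ∈ ZMod d`. -/
def omg (d : ℕ) (r : ZMod d) : ℂ := Complex.exp (2 * Real.pi * Complex.I * r.val / d)

/-- The matrix `Z` with `Z|m⟩ = ω(m)|m⟩`. -/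
def Zmat (d : ℕ) [Fact d.Prime] : Matrix (ZMod d) (ZMod d) ℂ :=
  Matrix.diagonal fun m => omg d m

/-- The matrix `X` with `X|m⟩ = |m+1⟩`. -/
def Xmat (d : ℕ) [Fact d.Prime] : Matrix (ZMod d) (ZMod d) ℂ :=
  Matrix.of fun m n => if m = n + 1 then 1 else 0

/-- The displacement operator `D(α,β) = ω(-2⁻¹αβ) Z^α X^β` as a matrix. -/
def Dmat (d : ℕ) [Fact d.Prime] (i : ZMod d × ZMod d) : Matrix (ZMod d) (ZMod d) ℂ :=
  omg d (-(2⁻¹ * i.1 * i.2)) • (Zmat d ^ (i.1).val * Xmat d ^ (i.2).val)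

/-- The displacement operator `D(i)` as a linear endomorphism of `ℂ^d`. -/
def Dlin (d : ℕ) [Fact d.Prime] (i : ZMod d × ZMod d) :
    EuclideanSpace ℂ (ZMod d) →ₗ[ℂ] EuclideanSpace ℂ (ZMod d) :=
  Matrix.toEuclideanLin (Dmat d i)

/-- The coherent subspace `H(A)`: the span of the coherent states `D(j)s`, `j ∈ A`. -/
def Hsub (d : ℕ) [Fact d.Prime] (s : EuclideanSpace ℂ (ZMod d))
    (A : Finset (ZMod d × ZMod d)) : Submodule ℂ (EuclideanSpace ℂ (ZMod d)) :=
  Submodule.span ℂ ((fun j => Dlin d j s) '' ↑A)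

/-- The coherent projector `Π(A)`: the orthogonal projection of `ℂ^d` onto `H(A)`,
as a linear endomorphism of `ℂ^d`. -/
def Proj (d : ℕ) [Fact d.Prime] (s : EuclideanSpace ℂ (ZMod d))
    (A : Finset (ZMod d × ZMod d)) :
    EuclideanSpace ℂ (ZMod d) →ₗ[ℂ] EuclideanSpace ℂ (ZMod d) :=
  (Hsub d s A).subtype ∘ₗ ((Hsub d s A).orthogonalProjection).toLinearMap


set_option linter.unusedSectionVars false
set_option linter.unusedVariables false
set_option maxHeartbeats 1000000

open scoped InnerProductSpace

namespace Aux

variable (d : ℕ) [Fact d.Prime]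

lemma hd0 : d ≠ 0 := (Fact.out : d.Prime).ne_zero

def zeta (d : ℕ) : ℂ := Complex.exp (2 * Real.pi * Complex.I / d)

lemma zeta_pow_d : zeta d ^ d = 1 := by
  rw [zeta, ← Complex.exp_nat_mul]
  have hd : (d : ℂ) ≠ 0 := Nat.cast_ne_zero.2 (hd0 d)
  rw [show (d : ℂ) * (2 * Real.pi * Complex.I / d) = 2 * Real.pi * Complex.I by
    field_simp]
  exact Complex.exp_two_pi_mul_I

lemma zeta_pow_mod (n : ℕ) : zeta d ^ n = zeta d ^ (n % d) := by
  conv_lhs => rw [← Nat.div_add_mod n d]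
  rw [pow_add, pow_mul, zeta_pow_d, one_pow, one_mul]

lemma zeta_pow_congr {a b : ℕ} (h : a % d = b % d) : zeta d ^ a = zeta d ^ b := by
  rw [zeta_pow_mod d a, zeta_pow_mod d b, h]

lemma omg_eq (r : ZMod d) : omg d r = zeta d ^ r.val := by
  rw [omg, zeta, ← Complex.exp_nat_mul]
  congr 1
  ring

lemma omg_natCast (a : ℕ) : omg d (a : ZMod d) = zeta d ^ a := by
  haveI : NeZero d := ⟨hd0 d⟩
  rw [omg_eq, ZMod.val_natCast]
  apply zeta_pow_congr
  simp [Nat.mod_mod_of_dvd]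

lemma omg_add (r t : ZMod d) : omg d (r + t) = omg d r * omg d t := by
  haveI : NeZero d := ⟨hd0 d⟩
  rw [omg_eq, omg_eq, omg_eq, ← pow_add]
  apply zeta_pow_congr
  rw [ZMod.val_add]
  simp [Nat.mod_mod_of_dvd]

lemma omg_zero : omg d 0 = 1 := by
  haveI : NeZero d := ⟨hd0 d⟩
  rw [omg_eq, ZMod.val_zero, pow_zero]

lemma omg_ne_zero (r : ZMod d) : omg d r ≠ 0 := by
  rw [omg]; exact Complex.exp_ne_zero _

lemma omg_conj (r : ZMod d) : (starRingEnd ℂ) (omg d r) = omg d (-r) := by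
  have h1 : (starRingEnd ℂ) (omg d r) * omg d r = 1 := by
    rw [omg, ← Complex.exp_conj, ← Complex.exp_add]
    rw [show (starRingEnd ℂ) (2 * Real.pi * Complex.I * (ZMod.val r) / d)
        + 2 * Real.pi * Complex.I * (ZMod.val r) / d = 0 from ?_]
    · exact Complex.exp_zero
    · simp only [map_div₀, map_mul, Complex.conj_I, Complex.conj_ofReal, map_natCast,
        map_ofNat]
      ring
  have h2 : omg d (-r) * omg d r = 1 := by
    rw [← omg_add, neg_add_cancel, omg_zero]
  exact mul_right_cancel₀ (omg_ne_zero d r) (h1.trans h2.symm)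

lemma sum_val (f : ℕ → ℂ) : ∑ a : ZMod d, f a.val = ∑ a ∈ Finset.range d, f a := by
  haveI : NeZero d := ⟨hd0 d⟩
  apply Finset.sum_nbij' (i := fun (a : ZMod d) => a.val) (j := fun a => (a : ZMod d))
  · intro a _; exact Finset.mem_range.2 a.val_lt
  · intro a _; exact Finset.mem_univ _
  · intro a _; exact ZMod.natCast_rightInverse a
  · intro a ha; exact ZMod.val_cast_of_lt (Finset.mem_range.1 ha)
  · intro a _; rfl

lemma omg_sum (c : ZMod d) : ∑ a : ZMod d, omg d (a * c) = if c = 0 then (d : ℂ) else 0 := by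
  haveI : NeZero d := ⟨hd0 d⟩
  have h1 : ∀ a : ZMod d, omg d (a * c) = (zeta d ^ c.val) ^ a.val := by
    intro a
    rw [omg_eq, ← pow_mul]
    apply zeta_pow_congr
    rw [ZMod.val_mul]
    simp [Nat.mod_mod_of_dvd, Nat.mul_comm]
  simp_rw [h1]
  rw [sum_val d (fun n => (zeta d ^ c.val) ^ n)]
  by_cases hc : c = 0
  · subst hc
    simp [ZMod.val_zero]
  · rw [if_neg hc]
    have hprim : IsPrimitiveRoot (zeta d) d := Complex.isPrimitiveRoot_exp d (hd0 d)
    have hval : 0 < c.val := Nat.pos_of_ne_zero fun h => hc (ZMod.val_eq_zero c |>.mp h)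
    have hx : zeta d ^ c.val ≠ 1 := hprim.pow_ne_one_of_pos_of_lt hval.ne' c.val_lt
    rw [geom_sum_eq hx]
    have hone : (zeta d ^ c.val) ^ d = 1 := by
      rw [← pow_mul, mul_comm, pow_mul, zeta_pow_d, one_pow]
    rw [hone, sub_self, zero_div]

lemma omg_pow (m : ZMod d) (a : ℕ) : omg d m ^ a = omg d ((a : ZMod d) * m) := by
  haveI : NeZero d := ⟨(Fact.out : d.Prime).ne_zero⟩
  have h1 : omg d m = omg d ((m.val : ℕ) : ZMod d) := by rw [ZMod.natCast_val, ZMod.cast_id]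
  rw [h1, omg_natCast, ← pow_mul, ← omg_natCast d (m.val * a)]
  congr 1
  push_cast
  rw [ZMod.natCast_val, ZMod.cast_id]
  ring

lemma Xpow_entry (b : ℕ) (m n : ZMod d) :
    (Xmat d ^ b) m n = if m = n + (b : ZMod d) then 1 else 0 := by
  induction b generalizing n with
  | zero => simp [Matrix.one_apply]
  | succ b ih =>
    rw [pow_succ, Matrix.mul_apply]
    rw [Finset.sum_eq_single (n + 1)]
    · rw [ih]
      have hX : Xmat d (n + 1) n = 1 := by simp [Xmat]
      rw [hX, mul_one]
      have : n + 1 + (b : ZMod d) = n + ((b : ℕ) + 1 : ZMod d) := by ring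
      rw [this]
      norm_cast
    · intro p _ hp
      have hX : Xmat d p n = 0 := by
        simp only [Xmat, Matrix.of_apply, ite_eq_right_iff]
        intro h; exact absurd h hp
      rw [hX, mul_zero]
    · intro h; exact absurd (Finset.mem_univ _) h

lemma Zpow (a : ℕ) : Zmat d ^ a = Matrix.diagonal (fun m => omg d m ^ a) := by
  rw [Zmat, Matrix.diagonal_pow]
  rfl

lemma Dmat_entry (k : ZMod d × ZMod d) (m n : ZMod d) :
    Dmat d k m n = if m = n + k.2 then omg d (-(2⁻¹ * k.1 * k.2) + k.1 * m) else 0 := by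
  haveI : NeZero d := ⟨(Fact.out : d.Prime).ne_zero⟩
  rw [Dmat, Matrix.smul_apply, Matrix.mul_apply]
  rw [Zpow]
  rw [Finset.sum_eq_single m]
  · rw [Matrix.diagonal_apply_eq, Xpow_entry, omg_pow]
    have hv : ((k.2.val : ℕ) : ZMod d) = k.2 := by rw [ZMod.natCast_val, ZMod.cast_id]
    have hv1 : ((k.1.val : ℕ) : ZMod d) = k.1 := by rw [ZMod.natCast_val, ZMod.cast_id]
    rw [hv, hv1]
    by_cases h : m = n + k.2
    · rw [if_pos h, if_pos h, mul_one, smul_eq_mul, ← omg_add]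
    · rw [if_neg h, if_neg h, mul_zero, smul_eq_mul, mul_zero]
  · intro p _ hp
    rw [Matrix.diagonal_apply_ne' _ hp, zero_mul]
  · intro h; exact absurd (Finset.mem_univ _) h


lemma two_mul_inv (hodd : Odd d) : (2 : ZMod d) * 2⁻¹ = 1 := by
  apply mul_inv_cancel₀
  intro h
  rw [show (2 : ZMod d) = ((2 : ℕ) : ZMod d) by norm_cast,
    ZMod.natCast_eq_zero_iff] at h
  have := (Nat.prime_dvd_prime_iff_eq (Fact.out : d.Prime) Nat.prime_two).mp h
  subst this
  simp [Nat.odd_iff] at hodd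

lemma Dmat_zero : Dmat d 0 = 1 := by
  ext m n
  rw [Dmat_entry]
  simp only [Prod.snd_zero, add_zero, Prod.fst_zero, mul_zero, zero_mul, neg_zero, zero_add,
    omg_zero, Matrix.one_apply]

lemma Dmat_mul (hodd : Odd d) (k p : ZMod d × ZMod d) :
    Dmat d k * Dmat d p = omg d (2⁻¹ * (k.1 * p.2 - p.1 * k.2)) • Dmat d (k + p) := by
  have h2 := two_mul_inv d hodd
  ext m n
  rw [Matrix.mul_apply, Matrix.smul_apply, Dmat_entry, smul_eq_mul]
  rw [Finset.sum_eq_single (n + p.2)]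
  · rw [Dmat_entry, Dmat_entry]
    by_cases h : m = n + p.2 + k.2
    · rw [if_pos h, if_pos rfl]
      have hcond : m = n + (k + p).2 := by rw [h, Prod.snd_add]; ring
      rw [if_pos hcond, ← omg_add, ← omg_add]
      congr 1
      rw [h]
      simp only [Prod.fst_add, Prod.snd_add]
      linear_combination (p.1 * k.2) * h2
    · rw [if_neg h, zero_mul]
      have hcond : ¬ m = n + (k + p).2 := by
        intro hc; apply h; rw [hc, Prod.snd_add]; ring
      rw [if_neg hcond, mul_zero]
  · intro q _ hq
    rw [Dmat_entry d p, if_neg hq, mul_zero]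
  · intro h; exact absurd (Finset.mem_univ _) h

lemma star_Dmat (hodd : Odd d) (k : ZMod d × ZMod d) :
    star (Dmat d k) = Dmat d (-k) := by
  have h2 := two_mul_inv d hodd
  ext m n
  rw [Matrix.star_apply, Dmat_entry, Dmat_entry]
  simp only [Prod.fst_neg, Prod.snd_neg]
  by_cases h : n = m + k.2
  · have hcond : m = n + -k.2 := by rw [h]; ring
    rw [if_pos h, if_pos hcond,
      show (star (omg d (-(2⁻¹ * k.1 * k.2) + k.1 * n)) : ℂ)
        = (starRingEnd ℂ) (omg d (-(2⁻¹ * k.1 * k.2) + k.1 * n)) from rfl, omg_conj]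
    congr 1
    rw [h]
    linear_combination (k.1 * k.2) * h2
  · have hcond : ¬ m = n + -k.2 := fun hc => h (by rw [hc]; ring)
    rw [if_neg h, if_neg hcond, star_zero]


lemma WH_term (M : Matrix (ZMod d) (ZMod d) ℂ) (k : ZMod d × ZMod d) (m n : ZMod d) :
    (Dmat d k * M * star (Dmat d k)) m n
      = omg d (k.1 * (m - n)) * M (m - k.2) (n - k.2) := by
  rw [Matrix.mul_apply]
  have hrow : ∀ q, (Dmat d k * M) m q = omg d (-(2⁻¹ * k.1 * k.2) + k.1 * m) * M (m - k.2) q := by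
    intro q
    rw [Matrix.mul_apply, Finset.sum_eq_single (m - k.2)]
    · rw [Dmat_entry, if_pos (by ring)]
    · intro p _ hp
      rw [Dmat_entry, if_neg (fun hc => hp (by rw [hc]; ring)), zero_mul]
    · intro h; exact absurd (Finset.mem_univ _) h
  simp_rw [hrow]
  rw [Finset.sum_eq_single (n - k.2)]
  · rw [Matrix.star_apply, Dmat_entry, if_pos (by ring : n = (n - k.2) + k.2),
      show (star (omg d (-(2⁻¹ * k.1 * k.2) + k.1 * n)) : ℂ)
        = (starRingEnd ℂ) (omg d (-(2⁻¹ * k.1 * k.2) + k.1 * n)) from rfl, omg_conj,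
      mul_right_comm, ← omg_add]
    rw [show -(2⁻¹ * k.1 * k.2) + k.1 * m + -(-(2⁻¹ * k.1 * k.2) + k.1 * n)
        = k.1 * (m - n) by ring]
  · intro q _ hq
    rw [Matrix.star_apply, Dmat_entry, if_neg (fun hc => hq (by rw [hc]; ring)), star_zero,
      mul_zero]
  · intro h; exact absurd (Finset.mem_univ _) h

lemma WH_sum (M : Matrix (ZMod d) (ZMod d) ℂ) :
    ∑ k : ZMod d × ZMod d, Dmat d k * M * star (Dmat d k)
      = (d : ℂ) • M.trace • (1 : Matrix (ZMod d) (ZMod d) ℂ) := by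
  ext m n
  rw [Matrix.sum_apply]
  simp_rw [WH_term]
  rw [Fintype.sum_prod_type]
  have hfact : ∑ x : ZMod d, ∑ y : ZMod d, omg d (x * (m - n)) * M (m - y) (n - y)
      = (∑ x : ZMod d, omg d (x * (m - n))) * (∑ y : ZMod d, M (m - y) (n - y)) :=
    (Finset.sum_mul_sum _ _ _ _).symm
  rw [show (∑ x : ZMod d, ∑ y : ZMod d,
        omg d ((x, y).1 * (m - n)) * M (m - (x, y).2) (n - (x, y).2))
      = ∑ x : ZMod d, ∑ y : ZMod d, omg d (x * (m - n)) * M (m - y) (n - y) from rfl,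
    hfact, omg_sum d (m - n)]
  by_cases h : m = n
  · subst h
    rw [if_pos (sub_self m), Matrix.smul_apply, Matrix.smul_apply, Matrix.one_apply_eq,
      smul_eq_mul, smul_eq_mul, mul_one]
    congr 1
    rw [Matrix.trace]
    exact Fintype.sum_equiv (Equiv.subLeft m) _ _ (fun b => rfl)
  · rw [if_neg (sub_ne_zero.2 h), zero_mul, Matrix.smul_apply, Matrix.smul_apply,
      Matrix.one_apply_ne h, smul_eq_mul, smul_eq_mul, mul_zero, mul_zero]

-- toEuclideanLin lemmas
lemma tel_mul (A B : Matrix (ZMod d) (ZMod d) ℂ) :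
    Matrix.toEuclideanLin (A * B) = Matrix.toEuclideanLin A ∘ₗ Matrix.toEuclideanLin B := by
  rw [Matrix.toEuclideanLin_eq_toLin,
    Matrix.toLin_mul (PiLp.basisFun 2 ℂ (ZMod d)) (PiLp.basisFun 2 ℂ (ZMod d))
      (PiLp.basisFun 2 ℂ (ZMod d))]

lemma tel_one : Matrix.toEuclideanLin (1 : Matrix (ZMod d) (ZMod d) ℂ) = LinearMap.id := by
  rw [Matrix.toEuclideanLin_eq_toLin, Matrix.toLin_one]

lemma tel_trace (M : Matrix (ZMod d) (ZMod d) ℂ) :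
    LinearMap.trace ℂ (EuclideanSpace ℂ (ZMod d)) (Matrix.toEuclideanLin M) = M.trace := by
  rw [Matrix.toEuclideanLin_eq_toLin,
    LinearMap.trace_eq_matrix_trace ℂ (PiLp.basisFun 2 ℂ (ZMod d)),
    LinearMap.toMatrix_toLin]

lemma adjoint_Dlin (hodd : Odd d) (k : ZMod d × ZMod d) :
    LinearMap.adjoint (Dlin d k) = Dlin d (-k) := by
  rw [Dlin, Dlin, ← Matrix.toEuclideanLin_conjTranspose_eq_adjoint,
    show (Dmat d k)ᴴ = star (Dmat d k) from rfl, star_Dmat d hodd]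

lemma Dlin_unitary_left (hodd : Odd d) (k : ZMod d × ZMod d) :
    LinearMap.adjoint (Dlin d k) ∘ₗ Dlin d k = LinearMap.id := by
  rw [adjoint_Dlin d hodd, Dlin, Dlin, ← tel_mul, Dmat_mul d hodd (-k) k]
  rw [show (2⁻¹ * ((-k).1 * k.2 - k.1 * (-k).2) : ZMod d) = 0 by
    rw [Prod.fst_neg, Prod.snd_neg]; ring]
  rw [omg_zero, one_smul, neg_add_cancel, Dmat_zero, tel_one]

lemma Dlin_mul_apply (hodd : Odd d) (k p : ZMod d × ZMod d) (s : EuclideanSpace ℂ (ZMod d)) :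
    Dlin d k (Dlin d p s) = omg d (2⁻¹ * (k.1 * p.2 - p.1 * k.2)) • Dlin d (k + p) s := by
  have h : Dlin d k ∘ₗ Dlin d p
      = omg d (2⁻¹ * (k.1 * p.2 - p.1 * k.2)) • Dlin d (k + p) := by
    rw [Dlin, Dlin, Dlin, ← tel_mul, Dmat_mul d hodd, map_smul]
  exact DFunLike.congr_fun h s

section Proj
variable {F : Type*} [NormedAddCommGroup F] [InnerProductSpace ℂ F] [FiniteDimensional ℂ F]

lemma span_image_smul_eq {α : Type*} (f g : α → F) (A : Set α)
    (h : ∀ p ∈ A, ∃ c : ℂ, c ≠ 0 ∧ f p = c • g p) :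
    Submodule.span ℂ (f '' A) = Submodule.span ℂ (g '' A) := by
  apply le_antisymm <;> rw [Submodule.span_le] <;> rintro _ ⟨p, hp, rfl⟩ <;>
    simp only [SetLike.mem_coe]
  · obtain ⟨c, hc, hfg⟩ := h p hp
    rw [hfg]
    exact Submodule.smul_mem _ _ (Submodule.subset_span ⟨p, hp, rfl⟩)
  · obtain ⟨c, hc, hfg⟩ := h p hp
    have hg : g p = c⁻¹ • f p := by rw [hfg, smul_smul, inv_mul_cancel₀ hc, one_smul]
    rw [hg]
    exact Submodule.smul_mem _ _ (Submodule.subset_span ⟨p, hp, rfl⟩)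

lemma proj_conj (T : F →ₗ[ℂ] F) (hT1 : LinearMap.adjoint T ∘ₗ T = LinearMap.id)
    (V : Submodule ℂ F) :
    (V.map T).subtype ∘ₗ ((V.map T).orthogonalProjection).toLinearMap
      = T ∘ₗ ((V.subtype ∘ₗ (V.orthogonalProjection).toLinearMap)
          ∘ₗ LinearMap.adjoint T) := by
  ext x
  simp only [LinearMap.comp_apply, Submodule.subtype_apply,
    ContinuousLinearMap.coe_coe]
  apply Submodule.eq_starProjection_of_mem_of_inner_eq_zero
  · exact Submodule.mem_map_of_mem (V.orthogonalProjection (LinearMap.adjoint T x)).2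
  · rintro w ⟨u, hu, rfl⟩
    set y : F := ↑(V.orthogonalProjection (LinearMap.adjoint T x))
    have hy : LinearMap.adjoint T (T y) = y := DFunLike.congr_fun hT1 y
    have h1 : ⟪T y, T u⟫_ℂ = ⟪y, u⟫_ℂ := by
      rw [← LinearMap.adjoint_inner_left T u (T y), hy]
    rw [inner_sub_left, h1, ← LinearMap.adjoint_inner_left T u x, ← inner_sub_left]
    exact Submodule.starProjection_inner_eq_zero (LinearMap.adjoint T x) u hu

lemma proj_congr {V W : Submodule ℂ F} (h : V = W) :
    V.subtype ∘ₗ (V.orthogonalProjection).toLinearMap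
      = W.subtype ∘ₗ (W.orthogonalProjection).toLinearMap := by subst h; rfl

lemma trace_proj (V : Submodule ℂ F) :
    LinearMap.trace ℂ F (V.subtype ∘ₗ (V.orthogonalProjection).toLinearMap)
      = (Module.finrank ℂ V : ℂ) := by
  apply LinearMap.IsProj.trace
  constructor
  · intro x
    exact (V.orthogonalProjection x).2
  · intro x hx
    exact Submodule.starProjection_eq_self_iff.mpr hx

end Proj
end Aux

/-- For `i ≠ j` with `D(i)s`, `D(j)s` linearly independent, the non-additivity
operators summed over the equivalence class vanish:
`∑ k, [Π({i,j} + k) − Π({i + k}) − Π({j + k})] = 0`. -/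
theorem sum_nonadditivity_operators_eq_zero
    (d : ℕ) [Fact d.Prime] (hodd : Odd d)
    (s : EuclideanSpace ℂ (ZMod d))
    (i j : ZMod d × ZMod d) (hij : i ≠ j)
    (hind : LinearIndependent ℂ ![Dlin d i s, Dlin d j s]) :
    ∑ k : ZMod d × ZMod d,
        (Proj d s (({i, j} : Finset (ZMod d × ZMod d)).image (· + k))
          - Proj d s {i + k} - Proj d s {j + k})
      = (0 : EuclideanSpace ℂ (ZMod d) →ₗ[ℂ] EuclideanSpace ℂ (ZMod d)) := by
  classical
  -- translation of projectors
  have hProj : ∀ (A : Finset (ZMod d × ZMod d)) (k : ZMod d × ZMod d),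
      Proj d s (A.image (· + k))
        = Dlin d k ∘ₗ (Proj d s A ∘ₗ LinearMap.adjoint (Dlin d k)) := by
    intro A k
    have hH : Hsub d s (A.image (· + k)) = (Hsub d s A).map (Dlin d k) := by
      rw [Hsub, Hsub, Submodule.map_span, Finset.coe_image, Set.image_image, Set.image_image]
      apply Aux.span_image_smul_eq
      intro p _
      refine ⟨omg d (-(2⁻¹ * (k.1 * p.2 - p.1 * k.2))), Aux.omg_ne_zero _ _, ?_⟩
      rw [Aux.Dlin_mul_apply d hodd, smul_smul, ← Aux.omg_add, neg_add_cancel, Aux.omg_zero,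
        one_smul, add_comm k p]
    simp only [Proj]
    rw [Aux.proj_congr hH]
    exact Aux.proj_conj (Dlin d k) (Aux.Dlin_unitary_left d hodd k) (Hsub d s A)
  have hsummand : ∀ k : ZMod d × ZMod d,
      Proj d s (({i, j} : Finset (ZMod d × ZMod d)).image (· + k))
          - Proj d s {i + k} - Proj d s {j + k}
        = Dlin d k ∘ₗ ((Proj d s {i, j} - Proj d s {i} - Proj d s {j})
            ∘ₗ LinearMap.adjoint (Dlin d k)) := by
    intro k
    rw [show ({i + k} : Finset (ZMod d × ZMod d)) = ({i} : Finset _).image (· + k) by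
        rw [Finset.image_singleton],
      show ({j + k} : Finset (ZMod d × ZMod d)) = ({j} : Finset _).image (· + k) by
        rw [Finset.image_singleton],
      hProj, hProj, hProj]
    ext x
    simp [LinearMap.sub_apply, LinearMap.comp_apply, map_sub]
  set T := Proj d s {i, j} - Proj d s {i} - Proj d s {j} with hT
  set M := Matrix.toEuclideanLin.symm T with hMdef
  have hTM : T = Matrix.toEuclideanLin M := (Matrix.toEuclideanLin.apply_symm_apply T).symm
  have hterm : ∀ k : ZMod d × ZMod d,
      Dlin d k ∘ₗ (T ∘ₗ LinearMap.adjoint (Dlin d k))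
        = Matrix.toEuclideanLin (Dmat d k * M * star (Dmat d k)) := by
    intro k
    rw [Aux.adjoint_Dlin d hodd, hTM, Aux.tel_mul, Aux.tel_mul, Aux.star_Dmat d hodd]
    rfl
  -- trace of T is zero
  have hu : Dlin d i s ≠ 0 := by
    have := hind.ne_zero 0
    simpa using this
  have hv : Dlin d j s ≠ 0 := by
    have := hind.ne_zero 1
    simpa using this
  have hH2 : Module.finrank ℂ (Hsub d s {i, j}) = 2 := by
    have himg : ((fun p => Dlin d p s) '' ↑({i, j} : Finset (ZMod d × ZMod d)))
        = Set.range ![Dlin d i s, Dlin d j s] := by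
      rw [Finset.coe_insert, Finset.coe_singleton, Set.image_insert_eq, Set.image_singleton]
      ext x
      simp [Fin.exists_fin_two, or_comm]
    rw [Hsub, himg, finrank_span_eq_card hind]
    simp
  have hHi : Module.finrank ℂ (Hsub d s {i}) = 1 := by
    rw [Hsub, Finset.coe_singleton, Set.image_singleton]
    exact finrank_span_singleton hu
  have hHj : Module.finrank ℂ (Hsub d s {j}) = 1 := by
    rw [Hsub, Finset.coe_singleton, Set.image_singleton]
    exact finrank_span_singleton hv
  have htrace : M.trace = 0 := by
    have h1 : M.trace = LinearMap.trace ℂ (EuclideanSpace ℂ (ZMod d)) T := by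
      rw [hTM, Aux.tel_trace]
    rw [h1, hT, map_sub, map_sub]
    simp only [Proj]
    rw [Aux.trace_proj, Aux.trace_proj, Aux.trace_proj, hH2, hHi, hHj]
    norm_num
  calc ∑ k : ZMod d × ZMod d,
        (Proj d s (({i, j} : Finset (ZMod d × ZMod d)).image (· + k))
          - Proj d s {i + k} - Proj d s {j + k})
      = ∑ k : ZMod d × ZMod d,
          Matrix.toEuclideanLin (Dmat d k * M * star (Dmat d k)) := by
        refine Finset.sum_congr rfl fun k _ => ?_
        rw [hsummand k, hterm k]
    _ = Matrix.toEuclideanLin (∑ k : ZMod d × ZMod d, Dmat d k * M * star (Dmat d k)) := by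
        rw [map_sum]
    _ = Matrix.toEuclideanLin ((d : ℂ) • M.trace • (1 : Matrix (ZMod d) (ZMod d) ℂ)) := by
        rw [Aux.WH_sum]
    _ = 0 := by rw [htrace, zero_smul, smul_zero, map_zero]

end
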